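/- arXiv:2605.00089 — 3 statements merged into one kernel-verified Lean document; each statement's English description precedes it below -/
import Mathlib

section
/- For real constants $r_s > 0$, $\alpha > 0$, $\ell \neq 0$, $D \geq 4$, the effective potential $V(r) = \frac{\ell^2}{2r^2}\left(1-\frac{r_s^{D-3}}{r^{D-3}}\right)\frac{1 + c_1 \alpha r_s^{D-3}/r^{D-1}}{1 - c_2 \alpha r_s^{D-3}/r^{D-1}}$ with $c_2 = 4(D-3)(D-2) > 0$ diverges to $+\infty$ as $r$ decreases to $r_* = (c_2\,\alpha\, r_s^{D-3})^{1/(D-1)}$ from above, provided $r_* > r_s$. -/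
open Real Filter Set Topology

/-!
Since `r_*^(D-1) = c₂ α r_s^(D-3)`, the potential is `N r / (1 - r_*^(D-1) / r^(D-1))` with `N`
continuous at `r_*`. There `N` is positive, because `r_* > r_s` makes the horizon factor positive
and `c₁ ≥ 0`, while the denominator tends to `0` from above as `r ↓ r_*`.
-/

theorem Real.rpow_one_div_natCast_sub_one_pow {x : ℝ} (hx : 0 ≤ x) {n : ℕ} (hn : 2 ≤ n) :
    (x ^ ((1 : ℝ) / ((n : ℝ) - 1))) ^ (n - 1) = x := by
  have hcast : ((n - 1 : ℕ) : ℝ) = (n : ℝ) - 1 := by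
    rw [Nat.cast_sub (by omega), Nat.cast_one]
  rw [one_div, ← hcast]
  exact rpow_inv_natCast_pow hx (by omega)

theorem one_sub_pow_div_pow_pos {a b : ℝ} (hb : 0 ≤ b) (hab : b < a) {n : ℕ} (hn : n ≠ 0) :
    0 < 1 - b ^ n / a ^ n := by
  have ha : 0 < a ^ n := pow_pos (hb.trans_lt hab) n
  rw [sub_pos, div_lt_one ha]
  exact pow_lt_pow_left₀ hab hb hn

theorem tendsto_one_sub_pow_div_pow_nhdsGT_zero {a : ℝ} (ha : 0 < a) {n : ℕ} (hn : n ≠ 0) :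
    Tendsto (fun r => 1 - a ^ n / r ^ n) (𝓝[>] a) (𝓝[>] 0) := by
  refine tendsto_nhdsWithin_of_tendsto_nhds_of_eventually_within _ ?_ ?_
  · have hcont : ContinuousAt (fun r => 1 - a ^ n / r ^ n) a := by
      fun_prop (disch := positivity)
    simpa [div_self (pow_pos ha n).ne'] using hcont.tendsto.mono_left nhdsWithin_le_nhds
  · filter_upwards [self_mem_nhdsWithin] with r hr
    exact one_sub_pow_div_pow_pos ha.le hr hn

theorem effective_potential_diverges_at_rstar
    (D : ℕ) (hD : 4 ≤ D) (rs α ℓ : ℝ) (hrs : 0 < rs) (hα : 0 < α) (hℓ : ℓ ≠ 0)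
    (c₁ c₂ : ℝ) (hc₁ : c₁ = 4 * (D - 3)) (hc₂ : c₂ = 4 * (D - 3) * (D - 2))
    (rstar : ℝ) (hrstar : rstar = (c₂ * α * rs ^ (D - 3)) ^ ((1 : ℝ) / (D - 1)))
    (hsmall : rstar > rs)
    (V : ℝ → ℝ)
    (hV : ∀ r : ℝ, V r = ℓ ^ 2 / (2 * r ^ 2) * (1 - rs ^ (D - 3) / r ^ (D - 3)) *
        ((1 + c₁ * α * rs ^ (D - 3) / r ^ (D - 1)) /
          (1 - c₂ * α * rs ^ (D - 3) / r ^ (D - 1)))) :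
    Tendsto V (nhdsWithin rstar (Ioi rstar)) atTop := by
  have hD' : (4 : ℝ) ≤ D := by exact_mod_cast hD
  have hc₁_nonneg : 0 ≤ c₁ := by rw [hc₁]; linarith
  have hc₂_pos : 0 < c₂ := by rw [hc₂]; nlinarith
  have hrstar_pos : 0 < rstar := hrs.trans hsmall
  have hrstar_pow : rstar ^ (D - 1) = c₂ * α * rs ^ (D - 3) := by
    rw [hrstar]; exact rpow_one_div_natCast_sub_one_pow (by positivity) (by omega)
  set N : ℝ → ℝ := fun r => ℓ ^ 2 / (2 * r ^ 2) * (1 - rs ^ (D - 3) / r ^ (D - 3)) *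
    (1 + c₁ * α * rs ^ (D - 3) / r ^ (D - 1))
  have hN_cont : ContinuousAt N rstar := by fun_prop (disch := positivity)
  have hN_pos : 0 < N rstar := by
    have horizon := one_sub_pow_div_pow_pos hrs.le hsmall (n := D - 3) (by omega)
    have : 0 ≤ c₁ * α * rs ^ (D - 3) / rstar ^ (D - 1) := by positivity
    exact mul_pos (mul_pos (by positivity) horizon) (by linarith)
  have hV_eq : V = fun r => N r * (1 - rstar ^ (D - 1) / r ^ (D - 1))⁻¹ := by
    ext r; rw [hV, hrstar_pow, mul_div_assoc', div_eq_mul_inv]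
  rw [hV_eq]
  exact (hN_cont.tendsto.mono_left nhdsWithin_le_nhds).pos_mul_atTop hN_pos
    (tendsto_one_sub_pow_div_pow_nhdsGT_zero hrstar_pos (by omega)).inv_tendsto_nhdsGT_zero
end

section
/- For every integer $D > 4$, the improper integral $\int_0^1 \frac{2 z^{D-5} - 3 z^{D-3} + 1}{(1-z^2)^{3/2}}\,dz$ converges and equals $\sqrt{\pi}\,\frac{(D-1)(D-3)}{2(D-4)}\cdot\frac{\Gamma(D/2)}{\Gamma((D+1)/2)}$. -/
/-!
Write `k = D - 5` and `W a = ∫₀¹ z ^ a / √(1 - z²)` (the Wallis integral `∫₀^{π/2} sin ^ a`).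
The function `z (1 - z ^ (k + 2)) / √(1 - z²)` vanishes at both ends of `[0, 1]`, and its
derivative is the integrand minus `(2 z ^ k + (k + 2) z ^ (k + 2)) / √(1 - z²)`; hence the
integral equals `2 W k + (k + 2) W (k + 2)`. The reduction formula `(a + 2) W (a + 2) = (a + 1) W a`
turns this into `(k + 3) W k`, and into the Gamma ratio through `W a = √π Γ((a+1)/2) / (2 Γ((a+2)/2))`.
-/

open Real MeasureTheory Set

theorem integral_Ioo_eq_sub_of_hasDerivAt {F f : ℝ → ℝ} {a b : ℝ} (hab : a ≤ b)
    (hF : ContinuousOn F (Icc a b)) (hd : ∀ x ∈ Ioo a b, HasDerivAt F (f x) x)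
    (hi : IntegrableOn f (Ioo a b)) :
    ∫ x in Ioo a b, f x = F b - F a := by
  rw [← integral_Ioc_eq_integral_Ioo, ← intervalIntegral.integral_of_le hab]
  exact intervalIntegral.integral_eq_sub_of_hasDerivAt_of_le hab hF hd
    ((intervalIntegrable_iff_integrableOn_Ioo_of_le hab).2 hi)

lemma one_sub_sq_pos {x : ℝ} (hx : x ∈ Ioo (0 : ℝ) 1) : 0 < 1 - x ^ 2 := by
  nlinarith [hx.1, hx.2]

lemma hasDerivAt_sqrt_one_sub_sq {x : ℝ} (hx : x ∈ Ioo (0 : ℝ) 1) :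
    HasDerivAt (fun z => √(1 - z ^ 2)) (-x / √(1 - x ^ 2)) x := by
  convert ((hasDerivAt_pow 2 x).const_sub 1).sqrt (one_sub_sq_pos hx).ne' using 1
  field_simp
  ring

lemma integrableOn_one_div_sqrt_one_sub_sq :
    IntegrableOn (fun z : ℝ => 1 / √(1 - z ^ 2)) (Ioo 0 1) :=
  (intervalIntegral.integrableOn_deriv_of_nonneg continuous_arcsin.continuousOn
    (fun x hx => hasDerivAt_arcsin (by linarith [hx.1]) hx.2.ne)
    (fun _ _ => by positivity)).mono_set Ioo_subset_Ioc_self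

lemma integrableOn_pow_div_sqrt_one_sub_sq (a : ℕ) :
    IntegrableOn (fun z : ℝ => z ^ a / √(1 - z ^ 2)) (Ioo 0 1) := by
  refine integrableOn_one_div_sqrt_one_sub_sq.mono'
    (by fun_prop : Measurable fun z : ℝ => z ^ a / √(1 - z ^ 2)).aestronglyMeasurable ?_
  filter_upwards [ae_restrict_mem measurableSet_Ioo] with x hx
  rw [norm_of_nonneg (by positivity [hx.1])]
  exact div_le_div_of_nonneg_right (pow_le_one₀ hx.1.le hx.2.le) (sqrt_nonneg _)

noncomputable def wallisIntegral (a : ℕ) : ℝ := ∫ z in Ioo (0 : ℝ) 1, z ^ a / √(1 - z ^ 2)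

lemma wallisIntegral_zero : wallisIntegral 0 = π / 2 := by
  have := integral_Ioo_eq_sub_of_hasDerivAt zero_le_one continuous_arcsin.continuousOn
    (fun x hx => hasDerivAt_arcsin (by linarith [hx.1]) hx.2.ne)
    integrableOn_one_div_sqrt_one_sub_sq
  simpa [wallisIntegral] using this

lemma wallisIntegral_one : wallisIntegral 1 = 1 := by
  have := integral_Ioo_eq_sub_of_hasDerivAt (F := fun z => -√(1 - z ^ 2))
    (f := fun z => z ^ 1 / √(1 - z ^ 2)) zero_le_one (by fun_prop)
    (fun x hx => by simpa [neg_div] using (hasDerivAt_sqrt_one_sub_sq hx).fun_neg)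
    (integrableOn_pow_div_sqrt_one_sub_sq 1)
  simpa [wallisIntegral] using this

lemma wallisIntegral_add_two (a : ℕ) :
    wallisIntegral (a + 2) = (a + 1) / (a + 2) * wallisIntegral a := by
  have hW := integrableOn_pow_div_sqrt_one_sub_sq
  have := integral_Ioo_eq_sub_of_hasDerivAt (F := fun z => z ^ (a + 1) * √(1 - z ^ 2))
    (f := fun z => (a + 1) * (z ^ a / √(1 - z ^ 2)) - (a + 2) * (z ^ (a + 2) / √(1 - z ^ 2)))
    zero_le_one (by fun_prop) (fun x hx => ?_)
    (((hW a).const_mul (a + 1)).sub ((hW (a + 2)).const_mul (a + 2)))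
  · rw [integral_sub ((hW a).const_mul _) ((hW (a + 2)).const_mul _), integral_const_mul,
      integral_const_mul] at this
    simp only [ne_eq, add_eq_zero, one_ne_zero, and_false, not_false_eq_true, zero_pow, zero_mul,
      one_pow, sub_self, sqrt_zero, mul_zero] at this
    unfold wallisIntegral
    field_simp
    linarith
  · have hs : 0 < √(1 - x ^ 2) := sqrt_pos.2 (one_sub_sq_pos hx)
    refine ((hasDerivAt_pow (a + 1) x).fun_mul (hasDerivAt_sqrt_one_sub_sq hx)).congr_deriv ?_
    field_simp
    rw [sq_sqrt (one_sub_sq_pos hx).le]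
    push_cast
    ring

lemma wallisIntegral_eq_gamma (a : ℕ) :
    wallisIntegral a = √π / 2 * (Gamma ((a + 1) / 2) / Gamma ((a + 2) / 2)) := by
  induction a using Nat.twoStepInduction with
  | zero =>
    rw [wallisIntegral_zero]
    norm_num [Gamma_one_half_eq, div_mul_eq_mul_div, mul_self_sqrt pi_pos.le]
  | one =>
    rw [wallisIntegral_one, show ((1 : ℕ) + 2 : ℝ) / 2 = 1 / 2 + 1 by norm_num,
      Gamma_add_one (by norm_num), Gamma_one_half_eq]
    have : √π ≠ 0 := (sqrt_pos.2 pi_pos).ne'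
    norm_num
    field_simp
  | more a ih _ =>
    have hG : ∀ s : ℝ, 0 < s → Gamma ((s + 2) / 2) = s / 2 * Gamma (s / 2) := fun s hs => by
      rw [show (s + 2) / 2 = s / 2 + 1 by ring, Gamma_add_one (by positivity)]
    rw [wallisIntegral_add_two, ih]
    push_cast
    rw [show (a : ℝ) + 2 + 1 = (a + 1) + 2 by ring, show (a : ℝ) + 2 + 2 = (a + 2) + 2 by ring,
      hG (a + 1) (by positivity), hG (a + 2) (by positivity)]
    have : Gamma ((a + 2) / 2) ≠ 0 := (Gamma_pos_of_pos (by positivity)).ne'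
    field_simp

lemma rpow_three_div_two_eq_mul_sqrt {y : ℝ} (hy : 0 ≤ y) : y ^ ((3 : ℝ) / 2) = y * √y := by
  rw [show (3 : ℝ) / 2 = 1 + 1 / 2 by norm_num, rpow_add' hy (by norm_num), rpow_one,
    sqrt_eq_rpow]

lemma one_sub_pow_le_mul_one_sub {x : ℝ} (hx : 0 ≤ x) (n : ℕ) : 1 - x ^ n ≤ n * (1 - x) := by
  have := one_add_mul_le_pow (show -2 ≤ x - 1 by linarith) n
  rw [add_sub_cancel] at this
  linarith

lemma tof_numerator_mem_Icc (k : ℕ) {x : ℝ} (hx : x ∈ Icc (0 : ℝ) 1) :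
    2 * x ^ k - 3 * x ^ (k + 2) + 1 ∈ Icc 0 ((k + 4) * (1 - x ^ 2)) := by
  obtain ⟨hx0, hx1⟩ := hx
  have hsplit : 2 * x ^ k - 3 * x ^ (k + 2) + 1 = (1 - x ^ (k + 2)) + 2 * x ^ k * (1 - x ^ 2) := by
    ring
  have hxk : x ^ k ≤ 1 := pow_le_one₀ hx0 hx1
  have hxk2 : x ^ (k + 2) ≤ 1 := pow_le_one₀ hx0 hx1
  have hu : 0 ≤ 1 - x ^ 2 := by nlinarith
  have hbern := one_sub_pow_le_mul_one_sub hx0 (k + 2)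
  rw [hsplit]
  constructor
  · have := pow_nonneg hx0 k
    positivity
  · push_cast at hbern
    nlinarith [mul_le_mul_of_nonneg_right hxk hu]

noncomputable def tofIntegrand (k : ℕ) (z : ℝ) : ℝ :=
  (2 * z ^ k - 3 * z ^ (k + 2) + 1) / (1 - z ^ 2) ^ ((3 : ℝ) / 2)

lemma tofIntegrand_mem_Icc (k : ℕ) {x : ℝ} (hx : x ∈ Ioo (0 : ℝ) 1) :
    tofIntegrand k x ∈ Icc 0 ((k + 4) * (1 / √(1 - x ^ 2))) := by
  have hu := one_sub_sq_pos hx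
  have hs : 0 < √(1 - x ^ 2) := sqrt_pos.2 hu
  obtain ⟨hN0, hN1⟩ := tof_numerator_mem_Icc k (Ioo_subset_Icc_self hx)
  rw [tofIntegrand, rpow_three_div_two_eq_mul_sqrt hu.le]
  refine ⟨by positivity, ?_⟩
  rw [div_le_iff₀ (by positivity)]
  calc _ ≤ _ := hN1
    _ = _ := by field_simp

lemma integrableOn_tofIntegrand (k : ℕ) : IntegrableOn (tofIntegrand k) (Ioo 0 1) := by
  refine (integrableOn_one_div_sqrt_one_sub_sq.const_mul (k + 4)).mono'
    (by unfold tofIntegrand; fun_prop : Measurable (tofIntegrand k)).aestronglyMeasurable ?_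
  filter_upwards [ae_restrict_mem measurableSet_Ioo] with x hx
  obtain ⟨h0, h1⟩ := tofIntegrand_mem_Icc k hx
  rwa [norm_of_nonneg h0]

lemma continuousOn_mul_one_sub_pow_div_sqrt_one_sub_sq (n : ℕ) :
    ContinuousOn (fun z : ℝ => z * (1 - z ^ n) / √(1 - z ^ 2)) (Icc 0 1) := by
  -- the singularity at `1` is removable: `1 - z ^ n` and `1 - z ^ 2` both contain the factor `1 - z`
  have hfactor : EqOn (fun z : ℝ => z * (∑ i ∈ Finset.range n, z ^ i) * (√(1 - z) / √(1 + z)))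
      (fun z : ℝ => z * (1 - z ^ n) / √(1 - z ^ 2)) (Icc 0 1) := fun z hz => by
    calc z * (∑ i ∈ Finset.range n, z ^ i) * (√(1 - z) / √(1 + z))
        = z * (∑ i ∈ Finset.range n, z ^ i) * ((1 - z) / √(1 - z) / √(1 + z)) := by
          rw [div_sqrt]
      _ = z * (1 - z ^ n) / √(1 - z ^ 2) := by
          rw [← mul_neg_geom_sum, show (1 : ℝ) - z ^ 2 = (1 - z) * (1 + z) by ring,
            sqrt_mul (by linarith [hz.2])]
          ring
  refine ContinuousOn.congr ?_ hfactor.symm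
  exact ContinuousOn.mul (by fun_prop)
    (ContinuousOn.div (by fun_prop) (by fun_prop) fun z hz => (sqrt_pos.2 (by linarith [hz.1])).ne')

lemma hasDerivAt_mul_one_sub_pow_div_sqrt_one_sub_sq (k : ℕ) {x : ℝ} (hx : x ∈ Ioo (0 : ℝ) 1) :
    HasDerivAt (fun z : ℝ => z * (1 - z ^ (k + 2)) / √(1 - z ^ 2))
      (tofIntegrand k x - (2 * (x ^ k / √(1 - x ^ 2)) + (k + 2) * (x ^ (k + 2) / √(1 - x ^ 2))))
      x := by
  have hu := one_sub_sq_pos hx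
  have hs : 0 < √(1 - x ^ 2) := sqrt_pos.2 hu
  refine (((hasDerivAt_id' x).fun_mul ((hasDerivAt_pow (k + 2) x).const_sub 1)).fun_div
    (hasDerivAt_sqrt_one_sub_sq hx) hs.ne').congr_deriv ?_
  rw [tofIntegrand, rpow_three_div_two_eq_mul_sqrt hu.le]
  field_simp
  rw [sq_sqrt hu.le]
  push_cast
  ring

lemma integral_tofIntegrand (k : ℕ) :
    ∫ z in Ioo (0 : ℝ) 1, tofIntegrand k z = (k + 3) * wallisIntegral k := by
  have hW := integrableOn_pow_div_sqrt_one_sub_sq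
  have hw := ((hW k).const_mul 2).fun_add ((hW (k + 2)).const_mul (k + 2))
  have hFTC := integral_Ioo_eq_sub_of_hasDerivAt zero_le_one
    (continuousOn_mul_one_sub_pow_div_sqrt_one_sub_sq (k + 2))
    (fun x hx => hasDerivAt_mul_one_sub_pow_div_sqrt_one_sub_sq k hx)
    ((integrableOn_tofIntegrand k).sub hw)
  rw [integral_sub (integrableOn_tofIntegrand k) hw,
    integral_add ((hW k).const_mul 2) ((hW (k + 2)).const_mul _), integral_const_mul,
    integral_const_mul] at hFTC
  simp only [one_pow, sub_self, mul_zero, sqrt_zero, div_zero, ne_eq, Nat.add_eq_zero_iff,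
    OfNat.ofNat_ne_zero, and_false, not_false_eq_true, zero_pow, sub_zero, mul_one, sqrt_one,
    div_one] at hFTC
  change _ - (2 * wallisIntegral k + (k + 2) * wallisIntegral (k + 2)) = 0 at hFTC
  rw [wallisIntegral_add_two] at hFTC
  field_simp at hFTC
  linarith

theorem geodesic_tof_first_order_integral
    (D : ℕ) (hD : 4 < D) :
    IntegrableOn (fun z : ℝ => (2 * z ^ (D - 5) - 3 * z ^ (D - 3) + 1) / (1 - z ^ 2) ^ ((3 : ℝ) / 2))
      (Ioo 0 1) volume ∧
    ∫ z in Ioo (0 : ℝ) 1, (2 * z ^ (D - 5) - 3 * z ^ (D - 3) + 1) / (1 - z ^ 2) ^ ((3 : ℝ) / 2) =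
      Real.sqrt π * ((D - 1) * (D - 3) / (2 * (D - 4))) *
        (Real.Gamma (D / 2) / Real.Gamma ((D + 1) / 2)) := by
  obtain ⟨k, rfl⟩ : ∃ k, D = k + 5 := ⟨D - 5, by omega⟩
  rw [show k + 5 - 5 = k by omega, show k + 5 - 3 = k + 2 by omega]
  refine ⟨integrableOn_tofIntegrand k, (integral_tofIntegrand k).trans ?_⟩
  have hGamma : Gamma ((k + 5 : ℕ) / 2) / Gamma (((k + 5 : ℕ) + 1) / 2) =
      2 / √π * wallisIntegral (k + 4) := by
    rw [wallisIntegral_eq_gamma, ← mul_assoc, div_mul_div_cancel₀ (sqrt_pos.2 pi_pos).ne']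
    push_cast
    ring_nf
  rw [hGamma, wallisIntegral_add_two, wallisIntegral_add_two]
  have : √π ≠ 0 := (sqrt_pos.2 pi_pos).ne'
  push_cast
  rw [show (k : ℝ) + 5 - 4 = k + 1 by ring]
  field_simp
  ring
end

section
/- Fix $r_s > 0$ and $\sigma > 0$. Define, for $R > \sigma$, the Schwarzschild-geodesic time $T_\gamma(R) = 2R + r_s(\ln(4R/r_s) + 1)$ and the lower bound for any curve entering the ball of radius $\sigma$, $T_{\tilde\gamma}(R) = 2(R - \sigma) + 2 r_s \ln(R/\sigma)$. Then for all $R > \frac{4\sigma^2}{r_s} e^{2\sigma/r_s + 1}$ one has $T_\gamma(R) < T_{\tilde\gamma}(R)$. -/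
open Real

/-
The time difference is `T_γ(R) - T̃(R) = 2σ + r_s + r_s log(4σ²/(r_s R))`, and the hypothesis on `R`
says exactly that the logarithm is below `-(2σ/r_s + 1)`, which makes the difference negative.
-/

lemma log_div_lt_neg_of_mul_exp_lt {a t R : ℝ} (ha : 0 < a) (hR : a * exp t < R) :
    log (a / R) < -t := by
  have hR0 : 0 < R := (by positivity : 0 < a * exp t).trans hR
  have hlog := log_lt_log (by positivity) hR
  rw [log_mul ha.ne' (exp_pos t).ne', log_exp] at hlog
  rw [log_div ha.ne' hR0.ne']
  linarith

lemma log_four_mul_div_sub_two_mul_log_div {rs σ R : ℝ} (hrs : 0 < rs) (hσ : 0 < σ) (hR : 0 < R) :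
    log (4 * R / rs) - 2 * log (R / σ) = log (4 * σ ^ 2 / rs / R) := by
  rw [log_div (by positivity) hrs.ne', log_div (by positivity) hR.ne',
    log_div (by positivity) hrs.ne', log_div hR.ne' hσ.ne', log_mul (by norm_num) hR.ne',
    log_mul (by norm_num) (by positivity), log_pow]
  push_cast
  ring

theorem schwarzschild_geodesic_beats_near_curve
    (rs σ : ℝ) (hrs : 0 < rs) (hσ : 0 < σ)
    (Tγ Ttilde : ℝ → ℝ)
    (hTγ : ∀ R : ℝ, Tγ R = 2 * R + rs * (Real.log (4 * R / rs) + 1))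
    (hTtilde : ∀ R : ℝ, Ttilde R = 2 * (R - σ) + 2 * rs * Real.log (R / σ)) :
    ∀ R : ℝ, R > 4 * σ ^ 2 / rs * Real.exp (2 * σ / rs + 1) → Tγ R < Ttilde R := by
  intro R hR
  have hR0 : 0 < R := lt_trans (by positivity) hR
  have hdiff : Tγ R - Ttilde R = 2 * σ + rs + rs * log (4 * σ ^ 2 / rs / R) := by
    rw [hTγ, hTtilde, ← log_four_mul_div_sub_two_mul_log_div hrs hσ hR0]
    ring
  have hlog : rs * log (4 * σ ^ 2 / rs / R) < -(2 * σ + rs) :=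
    calc rs * log (4 * σ ^ 2 / rs / R)
        < rs * -(2 * σ / rs + 1) :=
          mul_lt_mul_of_pos_left (log_div_lt_neg_of_mul_exp_lt (by positivity) hR) hrs
      _ = -(2 * σ + rs) := by field_simp
  linarith
end
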